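/- Let $X$ be a metric space, $x \in X$, and $u : X \to (-\infty, +\infty]$ lower semicontinuous at $x$ with $u(x) < \infty$. Let $(\nu_r)_{r>0}$ be a family of finite positive Borel measures on $X$ such that: (i) $\nu_r(X) \to 1$ as $r \to 0$; (ii) for every $\delta > 0$ there exists $\bar r > 0$ such that $\operatorname{supp}\nu_r \subseteq B(x,\delta)$ for all $0 < r \le \bar r$; and (iii) $\int_X u\, d\nu_r \le u(x)\,\nu_r(X)$ for all $r > 0$. Then $\lim_{r \to 0} \int_X u\, d\nu_r = u(x)$. -/

import Mathlib

/-!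
Mass tends to `1` and the measures concentrate at `x`, where `u` is eventually `> c` for any
`c < u x` by lower semicontinuity; hence `liminf ∫ u dν_r ≥ u x`. The sub-mean-value property
gives `∫ u dν_r ≤ u x · ν_r(X) → u x`, so `limsup ∫ u dν_r ≤ u x`.
-/

open MeasureTheory Filter Set Topology

section

variable {X ι : Type*} [MeasurableSpace X]

theorem const_mul_measureReal_univ_le_integral {μ : Measure X} [IsFiniteMeasure μ]
    {u : X → ℝ} {c : ℝ} (hu : Integrable u μ) (hc : ∀ᵐ y ∂μ, c ≤ u y) :
    c * μ.real univ ≤ ∫ y, u y ∂μ := by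
  simpa [integral_const, mul_comm] using integral_mono_ae (integrable_const c) hu hc

theorem eventually_isFiniteMeasure_of_tendsto_measureReal_univ {l : Filter ι}
    {ν : ι → Measure X} {m : ℝ} (hm : m ≠ 0)
    (hmass : Tendsto (fun i => (ν i).real univ) l (𝓝 m)) :
    ∀ᶠ i in l, IsFiniteMeasure (ν i) := by
  filter_upwards [hmass.eventually_ne hm] with i hi
  exact ⟨lt_top_iff_ne_top.2 (ENNReal.toReal_ne_zero.1 hi).2⟩

variable [TopologicalSpace X] {x : X} {u : X → ℝ} {l : Filter ι} {ν : ι → Measure X}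

theorem eventually_lt_integral_of_lowerSemicontinuousAt (hlsc : LowerSemicontinuousAt u x)
    (hmass : Tendsto (fun i => (ν i).real univ) l (𝓝 1))
    (hconc : ∀ s ∈ 𝓝 x, ∀ᶠ i in l, ν i sᶜ = 0) (hint : ∀ᶠ i in l, Integrable u (ν i))
    {a : ℝ} (ha : a < u x) : ∀ᶠ i in l, a < ∫ y, u y ∂ν i := by
  obtain ⟨c, hac, hcu⟩ := exists_between ha
  have hmass_c : Tendsto (fun i => c * (ν i).real univ) l (𝓝 c) := by
    simpa using hmass.const_mul c
  filter_upwards [hmass_c.eventually (lt_mem_nhds hac), hconc _ (hlsc c hcu), hint,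
    eventually_isFiniteMeasure_of_tendsto_measureReal_univ one_ne_zero hmass]
    with i hlt hc hi hfin
  exact hlt.trans_le <| const_mul_measureReal_univ_le_integral hi <|
    (show ∀ᵐ y ∂ν i, c < u y from hc).mono fun _ => le_of_lt

theorem tendsto_integral_of_lowerSemicontinuousAt (hlsc : LowerSemicontinuousAt u x)
    (hmass : Tendsto (fun i => (ν i).real univ) l (𝓝 1))
    (hconc : ∀ s ∈ 𝓝 x, ∀ᶠ i in l, ν i sᶜ = 0) (hint : ∀ᶠ i in l, Integrable u (ν i))
    (hsub : ∀ᶠ i in l, ∫ y, u y ∂ν i ≤ u x * (ν i).real univ) :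
    Tendsto (fun i => ∫ y, u y ∂ν i) l (𝓝 (u x)) := by
  have hmass_u : Tendsto (fun i => u x * (ν i).real univ) l (𝓝 (u x)) := by
    simpa using hmass.const_mul (u x)
  refine tendsto_order.2 ⟨fun a ha => ?_, fun a ha => ?_⟩
  · exact eventually_lt_integral_of_lowerSemicontinuousAt hlsc hmass hconc hint ha
  · filter_upwards [hsub, hmass_u.eventually (gt_mem_nhds ha)] with i hi hlt
    exact hi.trans_lt hlt

end

theorem shrinking_averages_tendsto_of_lsc_general {X : Type*} [MetricSpace X] [MeasurableSpace X]
    (x : X) (u : X → ℝ) (hlsc : LowerSemicontinuousAt u x)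
    (ν : ℝ → Measure X)
    (hmass : Tendsto (fun r => (ν r univ).toReal) (nhdsWithin 0 (Ioi 0)) (nhds 1))
    (hsupp : ∀ δ > (0 : ℝ), ∃ rbar > (0 : ℝ), ∀ r, 0 < r → r ≤ rbar →
      ν r (Metric.ball x δ)ᶜ = 0)
    (hint : ∀ r > (0 : ℝ), Integrable u (ν r))
    (hsub : ∀ r > (0 : ℝ), ∫ y, u y ∂ν r ≤ u x * (ν r univ).toReal) :
    Tendsto (fun r => ∫ y, u y ∂ν r) (nhdsWithin 0 (Ioi 0)) (nhds (u x)) := by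
  have hconc : ∀ s ∈ 𝓝 x, ∀ᶠ r in 𝓝[>] (0 : ℝ), ν r sᶜ = 0 := by
    intro s hs
    obtain ⟨δ, hδ, hball⟩ := Metric.mem_nhds_iff.1 hs
    obtain ⟨rbar, hrbar, hnull⟩ := hsupp δ hδ
    filter_upwards [Ioc_mem_nhdsGT hrbar] with r hr
    exact measure_mono_null (compl_subset_compl.2 hball) (hnull r hr.1 hr.2)
  exact tendsto_integral_of_lowerSemicontinuousAt hlsc hmass hconc
    (eventually_nhdsWithin_of_forall hint) (eventually_nhdsWithin_of_forall hsub)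

/-- If `u` is lower semicontinuous at `x`, and `(ν_r)` is a family of finite measures with
total mass tending to `1`, supports shrinking to `x`, and satisfying the sub-mean-value
property `∫ u dν_r ≤ u(x) ν_r(X)`, then the averages `∫ u dν_r` converge to `u(x)` as
`r → 0⁺`. -/
theorem shrinking_averages_tendsto_of_lsc {X : Type*} [MetricSpace X] [MeasurableSpace X]
    (x : X) (u : X → ℝ) (hlsc : LowerSemicontinuousAt u x)
    (ν : ℝ → Measure X) (hfin : ∀ r, IsFiniteMeasure (ν r))
    (hmass : Tendsto (fun r => (ν r univ).toReal) (nhdsWithin 0 (Ioi 0)) (nhds 1))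
    (hsupp : ∀ δ > (0 : ℝ), ∃ rbar > (0 : ℝ), ∀ r, 0 < r → r ≤ rbar →
      ν r (Metric.ball x δ)ᶜ = 0)
    (hint : ∀ r > (0 : ℝ), Integrable u (ν r))
    (hsub : ∀ r > (0 : ℝ), ∫ y, u y ∂ν r ≤ u x * (ν r univ).toReal) :
    Tendsto (fun r => ∫ y, u y ∂ν r) (nhdsWithin 0 (Ioi 0)) (nhds (u x)) :=
  shrinking_averages_tendsto_of_lsc_general x u hlsc ν hmass hsupp hint hsub
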